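/- Let H be a complex Hilbert space, W a unitary on H (W*W = 1 = WW*), and let U be the isometry on K = lp (fun _ : List (Fin d) => H) 2 determined by U(single σ h) = single (act 1 σ) (W^{carry 1 σ} h). Then U is unitary, i.e. U U* = 1 as well. -/

import Mathlib

/-! An isometry `U` is unitary as soon as `U*` is injective, since `U* (U U* x - x) = 0`.
Here `U*` is injective because the range of `U` contains every `single τ h`: the digit map
`act c 1` is onto (each digit can be chosen so that `(m + j) mod d` is any prescribed
value), and `W ^ n` is onto because `W W* = 1`. -/

open scoped Classical

namespace BSpaper

/-- `act m σ`: the result of pulling `b^m` through the stem with digit string `σ`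
in `BS(c,d)` (acting on the digits). -/
def act (c : ℕ) {d : ℕ} : ℕ → List (Fin d) → List (Fin d)
  | _, [] => []
  | m, i :: σ => ⟨(m + (i : ℕ)) % d, Nat.mod_lt _ i.pos⟩ :: act c (c * ((m + (i : ℕ)) / d)) σ

/-- `carry m σ`: the power of `b` emerging on the right when `b^m` is pulled through the
stem with digit string `σ`. -/
def carry (c : ℕ) {d : ℕ} : ℕ → List (Fin d) → ℕ
  | m, [] => m
  | m, i :: σ => carry c (c * ((m + (i : ℕ)) / d)) σ

open Fin.NatCast in
lemma exists_add_mod_eq {d : ℕ} (hd : 0 < d) (m : ℕ) (i : Fin d) :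
    ∃ j : Fin d, (m + j) % d = i := by
  have : NeZero d := NeZero.of_pos hd
  refine ⟨i - (m : Fin d), ?_⟩
  calc (m + ((i - (m : Fin d) : Fin d) : ℕ)) % d
    _ = ((m : Fin d) + (i - (m : Fin d)) : Fin d) := by
      rw [Fin.val_add, Fin.val_natCast, Nat.mod_add_mod]
    _ = i := by rw [add_sub_cancel]

lemma act_surjective (c : ℕ) {d : ℕ} (hd : 0 < d) (m : ℕ) :
    Function.Surjective (act c (d := d) m) := by
  intro τ
  induction τ generalizing m with
  | nil => exact ⟨[], rfl⟩
  | cons i τ ih =>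
    obtain ⟨j, hj⟩ := exists_add_mod_eq hd m i
    obtain ⟨σ, hσ⟩ := ih (c * ((m + j) / d))
    exact ⟨j :: σ, by simp only [act, hσ, hj]⟩

end BSpaper

namespace ContinuousLinearMap

variable {𝕜 E : Type*} [RCLike 𝕜] [NormedAddCommGroup E] [InnerProductSpace 𝕜 E]
  [CompleteSpace E]

lemma mul_adjoint_eq_one_of_injective_adjoint {U : E →L[𝕜] E} (hU : adjoint U * U = 1)
    (hinj : Function.Injective (adjoint U)) : U * adjoint U = 1 := by
  ext x
  exact hinj (DFunLike.congr_fun hU (adjoint U x))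

lemma surjective_pow_of_mul_adjoint_eq_one {W : E →L[𝕜] E} (hW : W * adjoint W = 1) (n : ℕ) :
    Function.Surjective (W ^ n) := by
  have hsurj : Function.Surjective W := fun x => ⟨adjoint W x, DFunLike.congr_fun hW x⟩
  induction n with
  | zero => exact Function.surjective_id
  | succ n ih => rw [pow_succ]; exact ih.comp hsurj

end ContinuousLinearMap

namespace lp

variable {𝕜 ι F : Type*} {E : ι → Type*} [RCLike 𝕜] [∀ i, NormedAddCommGroup (E i)]
  [∀ i, InnerProductSpace 𝕜 (E i)] [NormedAddCommGroup F] [InnerProductSpace 𝕜 F]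
  [CompleteSpace F] [∀ i, CompleteSpace (E i)] [DecidableEq ι]

lemma injective_adjoint_of_single_mem_range (T : F →L[𝕜] lp E 2)
    (hT : ∀ i (x : E i), lp.single 2 i x ∈ Set.range T) :
    Function.Injective (ContinuousLinearMap.adjoint T) := by
  refine (injective_iff_map_eq_zero _).2 fun x hx => ?_
  have horth : ∀ i (v : E i), inner 𝕜 v (x i) = 0 := fun i v => by
    obtain ⟨y, hy⟩ := hT i v
    rw [← lp.inner_single_left, ← hy, ← ContinuousLinearMap.adjoint_inner_right, hx,
      inner_zero_right]
  ext i
  exact inner_self_eq_zero.mp (horth i (x i))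

end lp

namespace BSpaper

open ContinuousLinearMap in
theorem statement17_general (c d : ℕ) (hd : 0 < d)
    {H : Type*} [NormedAddCommGroup H] [InnerProductSpace ℂ H] [CompleteSpace H]
    (W : H →L[ℂ] H) (hW' : W * adjoint W = 1)
    (U : lp (fun _ : List (Fin d) => H) 2 →L[ℂ] lp (fun _ : List (Fin d) => H) 2)
    (hUiso : adjoint U * U = 1)
    (hU : ∀ (σ : List (Fin d)) (h : H),
      U (lp.single 2 σ h) = lp.single 2 (act c 1 σ) ((W ^ carry c 1 σ) h)) :
    U * adjoint U = 1 := by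
  refine mul_adjoint_eq_one_of_injective_adjoint hUiso
    (lp.injective_adjoint_of_single_mem_range U fun τ h => ?_)
  obtain ⟨σ, rfl⟩ := act_surjective c hd 1 τ
  obtain ⟨h', rfl⟩ := surjective_pow_of_mul_adjoint_eq_one hW' (carry c 1 σ) h
  exact ⟨_, hU σ h'⟩

open ContinuousLinearMap in
/-- Let W be a unitary on H and let U be the isometry on
K = lp (fun _ : List (Fin d) => H) 2 determined by
U (single σ h) = single (act 1 σ) (W^(carry 1 σ) h).  Then U is unitary: U U* = 1. -/
theorem statement17 (c d : ℕ) (hc : 0 < c) (hd : 0 < d)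
    {H : Type*} [NormedAddCommGroup H] [InnerProductSpace ℂ H] [CompleteSpace H]
    (W : H →L[ℂ] H) (hW : adjoint W * W = 1) (hW' : W * adjoint W = 1)
    (U : lp (fun _ : List (Fin d) => H) 2 →L[ℂ] lp (fun _ : List (Fin d) => H) 2)
    (hUiso : adjoint U * U = 1)
    (hU : ∀ (σ : List (Fin d)) (h : H),
      U (lp.single 2 σ h) = lp.single 2 (act c 1 σ) ((W ^ carry c 1 σ) h)) :
    U * adjoint U = 1 :=
  statement17_general c d hd W hW' U hUiso hU

end BSpaper
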